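/- Let D = z₁₂ ∂/∂z₁₁ + z₂₂ ∂/∂z₂₁ act on Q[z₁₁,z₁₂,z₂₁,z₂₂], let φ = z₁₁² + z₂₁², χ = z₁₁z₁₂ + z₂₁z₂₂, ψ = z₁₂² + z₂₂², ν = z₁₁z₂₂ − z₁₂z₂₁, ξ = φψ, η = χ². Then for any even integer k ≥ 0: (1/k!)·D^k(φ^k) = 2^k · ∑_{i=0}^{k/2} C(k/2, i) · C((k−1)/2, i) · ξ^i · η^{k/2 − i}, where C((k−1)/2, i) is a generalized binomial coefficient of the half-integer (k−1)/2. -/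

import Mathlib

open MvPolynomial

/-- Generalized binomial coefficient `C(x,k) = x(x-1)⋯(x-k+1)/k!` for rational `x`. -/
noncomputable def gchoose (x : ℚ) (k : ℕ) : ℚ :=
  (∏ j ∈ Finset.range k, (x - j)) / (k.factorial : ℚ)

/-- The derivation `D = z₁₂ ∂/∂z₁₁ + z₂₂ ∂/∂z₂₁` on `ℚ[z₁₁,z₁₂,z₂₁,z₂₂]`,
with variables `z₁₁ = X 0`, `z₁₂ = X 1`, `z₂₁ = X 2`, `z₂₂ = X 3`. -/
noncomputable def Dop (f : MvPolynomial (Fin 4) ℚ) : MvPolynomial (Fin 4) ℚ :=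
  X 1 * pderiv 0 f + X 3 * pderiv 2 f

namespace Stmt15Aux

abbrev R4 := MvPolynomial (Fin 4) ℚ

noncomputable def σm : R4 →ₐ[ℚ] Polynomial R4 :=
  MvPolynomial.aeval ![Polynomial.C (X 0) + Polynomial.X * Polynomial.C (X 1),
    Polynomial.C (X 1),
    Polynomial.C (X 2) + Polynomial.X * Polynomial.C (X 3),
    Polynomial.C (X 3)]

lemma Dop_add (p q : R4) : Dop (p + q) = Dop p + Dop q := by
  simp [Dop]; ring

lemma Dop_mul (p q : R4) : Dop (p * q) = Dop p * q + p * Dop q := by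
  simp [Dop, pderiv_mul]; ring

lemma Dop_C (a : ℚ) : Dop (C a) = 0 := by simp [Dop]

lemma dcomm (f : R4) : Polynomial.derivative (σm f) = σm (Dop f) := by
  induction f using MvPolynomial.induction_on with
  | C a => simp [σm, Dop_C, algebraMap_eq]
  | add p q hp hq => rw [map_add, map_add, Dop_add, map_add, hp, hq]
  | mul_X p i hp =>
      rw [show σm (p * X i) = σm p * σm (X i) from map_mul σm p (X i),
        Polynomial.derivative_mul, hp, Dop_mul, map_add,
        show σm (Dop p * X i) = σm (Dop p) * σm (X i) from map_mul σm _ _,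
        show σm (p * Dop (X i)) = σm p * σm (Dop (X i)) from map_mul σm _ _]
      congr 1
      fin_cases i <;> simp [σm, Dop]

lemma ev0 (f : R4) : Polynomial.eval 0 (σm f) = f := by
  induction f using MvPolynomial.induction_on with
  | C a => simp [σm, algebraMap_eq]
  | add p q hp hq => simp [map_add, hp, hq]
  | mul_X p i hp =>
      rw [map_mul, Polynomial.eval_mul, hp]
      congr 1
      fin_cases i <;> simp [σm]

lemma key (f : R4) (n : ℕ) : Dop^[n] f = (n.factorial : ℚ) • (σm f).coeff n := by
  have h : σm (Dop^[n] f) = Polynomial.derivative^[n] (σm f) := by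
    induction n with
    | zero => simp
    | succ n ih =>
        rw [Function.iterate_succ_apply', Function.iterate_succ_apply', ← dcomm, ih]
  calc Dop^[n] f = Polynomial.eval 0 (σm (Dop^[n] f)) := (ev0 _).symm
    _ = (Polynomial.derivative^[n] (σm f)).coeff 0 := by
        rw [h, Polynomial.coeff_zero_eq_eval_zero]
    _ = n.factorial • (σm f).coeff n := by
        simpa [Nat.descFactorial_self] using Polynomial.coeff_iterate_derivative (σm f) 0
    _ = (n.factorial : ℚ) • (σm f).coeff n := (Nat.cast_smul_eq_nsmul ℚ _ _).symm

end Stmt15Aux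

namespace Stmt15Aux2

lemma binom {R : Type*} [CommRing R] (b c : R) (m j : ℕ) :
    ((Polynomial.C b + Polynomial.C c * Polynomial.X) ^ m).coeff j
      = (m.choose j : R) * (b ^ (m - j) * c ^ j) := by
  have hterm : ∀ l : ℕ, (Polynomial.C b) ^ l * (Polynomial.C c * Polynomial.X) ^ (m - l) *
      ((m.choose l : ℕ) : Polynomial R)
      = Polynomial.C (b ^ l * c ^ (m - l) * (m.choose l : R)) * Polynomial.X ^ (m - l) := by
    intro l
    rw [mul_pow, ← Polynomial.C_pow, ← Polynomial.C_pow, ← Polynomial.C_eq_natCast,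
      Polynomial.C_mul, Polynomial.C_mul]
    ring
  have hc : ∀ l : ℕ, ((Polynomial.C b) ^ l * (Polynomial.C c * Polynomial.X) ^ (m - l) *
      ((m.choose l : ℕ) : Polynomial R)).coeff j
      = if m - l = j then b ^ l * c ^ (m - l) * (m.choose l : R) else 0 := by
    intro l
    rw [hterm l, Polynomial.coeff_C_mul, Polynomial.coeff_X_pow]
    simp [eq_comm]
  rw [add_pow, Polynomial.finset_sum_coeff, Finset.sum_congr rfl fun l _ => hc l,
    Finset.sum_eq_single (m - j)]
  · by_cases hj : j ≤ m
    · rw [if_pos (by omega), Nat.choose_symm hj, show m - (m - j) = j by omega]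
      ring
    · rw [if_neg (by omega), Nat.choose_eq_zero_of_lt (by omega), Nat.cast_zero, zero_mul]
  · intro l hl hlne
    rw [if_neg]
    simp only [Finset.mem_range] at hl
    omega
  · intro h
    exact absurd (Finset.mem_range.mpr (by omega)) h

lemma coeff_tri {R : Type*} [CommRing R] (a b c : R) (k : ℕ) :
    ((Polynomial.C a + Polynomial.C b * Polynomial.X + Polynomial.C c * Polynomial.X ^ 2) ^ k).coeff k
      = ∑ i ∈ Finset.range (k + 1),
          (k.choose i : R) * ((k - i).choose i : R) * (a ^ i * b ^ (k - i - i) * c ^ i) := by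
  have h : Polynomial.C a + Polynomial.C b * Polynomial.X + Polynomial.C c * Polynomial.X ^ 2
      = Polynomial.C a + Polynomial.X * (Polynomial.C b + Polynomial.C c * Polynomial.X) := by
    ring
  rw [h, add_pow, Polynomial.finset_sum_coeff]
  refine Finset.sum_congr rfl fun i hi => ?_
  have hik : i ≤ k := by simpa using Nat.lt_succ_iff.mp (Finset.mem_range.mp hi)
  have h2 : (Polynomial.C a) ^ i *
        (Polynomial.X * (Polynomial.C b + Polynomial.C c * Polynomial.X)) ^ (k - i)
      * ((k.choose i : ℕ) : Polynomial R)
      = Polynomial.C (a ^ i * (k.choose i : R)) *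
        (Polynomial.X ^ (k - i) * (Polynomial.C b + Polynomial.C c * Polynomial.X) ^ (k - i)) := by
    rw [mul_pow, ← Polynomial.C_pow, ← Polynomial.C_eq_natCast, Polynomial.C_mul]
    ring
  rw [h2, Polynomial.coeff_C_mul, Polynomial.coeff_X_pow_mul', if_pos (by omega : k - i ≤ k),
    show k - (k - i) = i from by omega, binom]
  rw [show k - i - i = k - i - i from rfl]
  ring

end Stmt15Aux2

namespace Stmt15Aux3

lemma gnat (m : ℕ) (i : ℕ) :
    (∏ j ∈ Finset.range i, ((m : ℚ) - j)) = (m.choose i : ℚ) * i.factorial := by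
  induction i with
  | zero => simp
  | succ i ih =>
    rw [Finset.prod_range_succ, ih]
    rcases lt_trichotomy i m with him | rfl | him
    · have hcast : ((m : ℚ) - i) = ((m - i : ℕ) : ℚ) := by
        rw [Nat.cast_sub him.le]
      rw [hcast, mul_assoc, ← Nat.cast_mul, ← Nat.cast_mul]
      norm_cast
      rw [show m.choose (i+1) * (i+1).factorial = m.choose (i+1) * (i+1) * i.factorial from by
        rw [Nat.factorial_succ]; ring, Nat.choose_succ_right_eq]
      ring
    · simp [Nat.choose_succ_self]
    · simp [Nat.choose_eq_zero_of_lt him, Nat.choose_eq_zero_of_lt (by omega : m < i + 1)]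

lemma factEq (k : ℕ) : ∀ i : ℕ, 2 * i ≤ k →
    (k.factorial : ℚ) = ((k - 2*i).factorial : ℚ) * 4^i *
      (∏ j ∈ Finset.range i, ((k:ℚ)/2 - j)) * (∏ j ∈ Finset.range i, (((k:ℚ)-1)/2 - j)) := by
  intro i
  induction i with
  | zero => simp
  | succ i ih =>
    intro h
    have ih' := ih (by omega)
    rw [Finset.prod_range_succ, Finset.prod_range_succ, ← mul_assoc]
    have e1 : k - 2*i = (k - 2*(i+1)) + 1 + 1 := by omega
    rw [e1, Nat.factorial_succ, Nat.factorial_succ] at ih'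
    have e2 : ((k - 2*(i+1) : ℕ) : ℚ) = (k : ℚ) - 2*(i+1) := by
      rw [Nat.cast_sub (by omega)]; push_cast; ring
    push_cast at ih'
    rw [e2] at ih'
    rw [ih']
    ring

lemma scal (k i m : ℕ) (hk : k = m + m) (hi : i ≤ m) :
    (k.choose i : ℚ) * ((k - i).choose i : ℚ) * 2^(k - 2*i)
      = 2^k * (m.choose i : ℚ) * gchoose (((k:ℚ)-1)/2) i := by
  have h2i : 2 * i ≤ k := by omega
  have hB := factEq k i h2i
  have hm : ((k:ℚ)/2) = (m:ℚ) := by subst hk; push_cast; ring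
  rw [hm, gnat m i] at hB
  have hg : gchoose (((k:ℚ)-1)/2) i
      = (∏ j ∈ Finset.range i, (((k:ℚ)-1)/2 - j)) / i.factorial := rfl
  rw [Nat.cast_choose ℚ (show i ≤ k by omega), Nat.cast_choose ℚ (show i ≤ k - i by omega),
    hg, show k - i - i = k - 2*i from by omega,
    show (2:ℚ)^k = 2^(k-2*i) * 4^i from by
      rw [show (4:ℚ) = 2^2 from by norm_num, ← pow_mul, ← pow_add]
      congr 1
      omega,
    hB]
  have h1 : (i.factorial : ℚ) ≠ 0 := Nat.cast_ne_zero.mpr i.factorial_ne_zero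
  have h2 : ((k - i).factorial : ℚ) ≠ 0 := Nat.cast_ne_zero.mpr (k - i).factorial_ne_zero
  have h3 : ((k - 2*i).factorial : ℚ) ≠ 0 := Nat.cast_ne_zero.mpr (k - 2*i).factorial_ne_zero
  field_simp

end Stmt15Aux3


/-- With `φ = z₁₁² + z₂₁²`, `ψ = z₁₂² + z₂₂²`, `χ = z₁₁z₁₂ + z₂₁z₂₂`,
`ξ = φψ`, `η = χ²`: for any even `k ≥ 0`,
`(1/k!) D^k(φ^k) = 2^k ∑_{i=0}^{k/2} C(k/2,i) C((k-1)/2,i) ξ^i η^{k/2-i}`. -/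
theorem stmt15 (k : ℕ) (hk : Even k) :
    Dop^[k] (((X 0 : MvPolynomial (Fin 4) ℚ) ^ 2 + X 2 ^ 2) ^ k) =
      (k.factorial : ℚ) • ((2 : ℚ) ^ k •
        ∑ i ∈ Finset.range (k / 2 + 1),
          (((k / 2).choose i : ℚ) * gchoose (((k : ℚ) - 1) / 2) i) •
            ((((X 0 : MvPolynomial (Fin 4) ℚ) ^ 2 + X 2 ^ 2) *
                (X 1 ^ 2 + X 3 ^ 2)) ^ i *
              ((X 0 * X 1 + X 2 * X 3) ^ 2) ^ (k / 2 - i))) := by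
  obtain ⟨m, hm⟩ := hk
  have hk2 : k / 2 = m := by omega
  rw [hk2, Stmt15Aux.key]
  congr 1
  have hσ : Stmt15Aux.σm (((X 0 : MvPolynomial (Fin 4) ℚ) ^ 2 + X 2 ^ 2) ^ k)
      = (Polynomial.C ((X 0 : MvPolynomial (Fin 4) ℚ) ^ 2 + X 2 ^ 2)
        + Polynomial.C (2 * (X 0 * X 1 + X 2 * X 3)) * Polynomial.X
        + Polynomial.C ((X 1 : MvPolynomial (Fin 4) ℚ) ^ 2 + X 3 ^ 2) * Polynomial.X ^ 2) ^ k := by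
    rw [map_pow]
    congr 1
    simp only [Stmt15Aux.σm, map_add, map_pow, MvPolynomial.aeval_X]
    simp only [Matrix.cons_val_zero, Matrix.cons_val_one, Matrix.head_cons,
      Matrix.cons_val_two, Matrix.tail_cons, Matrix.cons_val_three, Matrix.head_fin_const]
    simp only [map_add, map_mul, map_pow, map_ofNat, Polynomial.C_add, Polynomial.C_mul,
      Polynomial.C_pow]
    ring
  rw [hσ, Stmt15Aux2.coeff_tri, Finset.smul_sum]
  rw [Finset.sum_subset (Finset.range_subset_range.mpr (by omega : m + 1 ≤ k + 1))
    (fun x hx hx2 => by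
      simp only [Finset.mem_range] at hx hx2
      rw [Nat.choose_eq_zero_of_lt (by omega : m < x)]
      simp)]
  refine Finset.sum_congr rfl fun i hi => ?_
  have hik : i ≤ k := by
    simp only [Finset.mem_range] at hi; omega
  by_cases him : i ≤ m
  · have hχ2 : (((X 0 * X 1 + X 2 * X 3 : MvPolynomial (Fin 4) ℚ) ^ 2) ^ (m - i))
        = (X 0 * X 1 + X 2 * X 3) ^ (k - 2*i) := by
      rw [← pow_mul]
      congr 1
      omega
    rw [smul_smul, hχ2, show k - i - i = k - 2*i from by omega]
    have hA := Stmt15Aux3.scal k i m hm him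
    have hA' : (2:ℚ)^k * ((m.choose i : ℚ) * gchoose (((k:ℚ) - 1) / 2) i)
        = (k.choose i : ℚ) * ((k - i).choose i : ℚ) * 2^(k - 2*i) := by
      linear_combination -hA
    rw [hA', MvPolynomial.smul_eq_C_mul]
    simp only [map_mul, map_pow, map_natCast, map_ofNat, mul_pow]
    ring
  · rw [Nat.choose_eq_zero_of_lt (by omega : k - i < i), Nat.cast_zero]
    rw [Nat.choose_eq_zero_of_lt (by omega : m < i)]
    simp
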